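/- arXiv:math/0703298 — 6 statements merged into one kernel-verified Lean document; each statement's English description precedes it below -/
import Mathlib

section
/- For every subspace Δ ⊆ V and every alternating bilinear form ε on Δ, the subspace L(Δ,ε) ⊆ W is maximal isotropic (it is isotropic and dim L(Δ,ε) = m); moreover L(Δ,ε) ∩ ({0} ⊕ V*) = {0} ⊕ Ann(Δ) and π_V(L(Δ,ε)) = Δ, so L(Δ,ε) is an extension of Δ by Ann(Δ). -/
/-!
Alternation of `ε` makes `ε(X,Y) + ε(Y,X)` vanish, which is exactly the pairing of two elements
of `L(Δ,ε)`. Every functional `ε(X,·)` on `Δ` extends to `V`, so `L(Δ,ε)` projects onto `Δ`; the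
kernel of this projection consists of the `ξ` vanishing on `Δ`. Rank–nullity and
`dim Δ + dim Ann(Δ) = m` then give `dim L(Δ,ε) = m`.
-/

open Module

/-- The canonical symmetric bilinear form on `W = V ⊕ V*`:
`⟨X+ξ, Y+η⟩ = (1/2)(ξ(Y) + η(X))`. -/
noncomputable def pairB (V : Type*) [AddCommGroup V] [Module ℝ V] :
    LinearMap.BilinForm ℝ (V × Module.Dual ℝ V) :=
  LinearMap.mk₂ ℝ (fun x y => (1/2) * (x.2 y.1 + y.2 x.1))
    (fun x y z => by simp; ring)
    (fun c x y => by simp; ring)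
    (fun x y z => by simp; ring)
    (fun c x y => by simp; ring)

/-- The maximal isotropic `L(Δ,ε) = {X + ξ : X ∈ Δ, ξ|_Δ = ε(X,·)}` determined by a
subspace `Δ ⊆ V` and a bilinear form `ε` on `Δ`. -/
noncomputable def LDE {V : Type*} [AddCommGroup V] [Module ℝ V]
    (Δ : Submodule ℝ V) (ε : Δ →ₗ[ℝ] Δ →ₗ[ℝ] ℝ) :
    Submodule ℝ (V × Module.Dual ℝ V) where
  carrier := {w | ∃ h : w.1 ∈ Δ, ∀ Y : Δ, w.2 Y = ε ⟨w.1, h⟩ Y}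
  zero_mem' := ⟨Δ.zero_mem, fun Y => by
    have h0 : (⟨(0 : V × Module.Dual ℝ V).1, Δ.zero_mem⟩ : Δ) = 0 := rfl
    rw [h0]; simp⟩
  add_mem' := by
    rintro a b ⟨ha, hα⟩ ⟨hb, hβ⟩
    refine ⟨Δ.add_mem ha hb, fun Y => ?_⟩
    have h1 : (⟨(a + b).1, Δ.add_mem ha hb⟩ : Δ) = ⟨a.1, ha⟩ + ⟨b.1, hb⟩ := rfl
    rw [h1]
    simp only [map_add, LinearMap.add_apply, Prod.snd_add]
    rw [hα Y, hβ Y]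
  smul_mem' := by
    rintro c a ⟨ha, hα⟩
    refine ⟨Δ.smul_mem c ha, fun Y => ?_⟩
    have h1 : (⟨(c • a).1, Δ.smul_mem c ha⟩ : Δ) = c • (⟨a.1, ha⟩ : Δ) := rfl
    rw [h1]
    simp only [map_smul, LinearMap.smul_apply, Prod.smul_snd, smul_eq_mul]
    rw [hα Y]

namespace Submodule

variable {K M N : Type*} [DivisionRing K] [AddCommGroup M] [Module K M] [AddCommGroup N]
  [Module K N]

theorem finrank_map_add_finrank_inf_ker (f : M →ₗ[K] N) (p : Submodule K M)
    [FiniteDimensional K p] :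
    finrank K (p.map f) + finrank K (p ⊓ LinearMap.ker f : Submodule K M) = finrank K p := by
  have h := (f.domRestrict p).finrank_range_add_finrank_ker
  rwa [LinearMap.range_domRestrict, LinearMap.ker_domRestrict,
    ← finrank_map_subtype_eq, map_comap_subtype] at h

theorem finrank_bot_prod (q : Submodule K N) :
    finrank K ((⊥ : Submodule K M).prod q) = finrank K q := by
  rw [← map_inr]
  exact (equivMapOfInjective _ LinearMap.inr_injective q).finrank_eq.symm

theorem finrank_map_fst_add_finrank_inf_bot_prod_top (p : Submodule K (M × N))
    [FiniteDimensional K p] :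
    finrank K (p.map (LinearMap.fst K M N)) + finrank K (p ⊓ (⊥ : Submodule K M).prod ⊤ :
      Submodule K (M × N)) = finrank K p := by
  rw [← map_inr, ← LinearMap.range_eq_map, ← LinearMap.ker_fst]
  exact finrank_map_add_finrank_inf_ker _ p

end Submodule

section LDE

variable {V : Type*} [AddCommGroup V] [Module ℝ V] (Δ : Submodule ℝ V) (ε : Δ →ₗ[ℝ] Δ →ₗ[ℝ] ℝ)

theorem LDE_isotropic (halt : ε.IsAlt) :
    ∀ x ∈ LDE Δ ε, ∀ y ∈ LDE Δ ε, pairB V x y = 0 := by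
  rintro x ⟨hx, hξ⟩ y ⟨hy, hη⟩
  have hskew := halt.neg ⟨x.1, hx⟩ ⟨y.1, hy⟩
  simp only [pairB, LinearMap.mk₂_apply, hξ ⟨y.1, hy⟩, hη ⟨x.1, hx⟩, ← hskew, add_neg_cancel,
    mul_zero]

theorem map_fst_LDE : (LDE Δ ε).map (LinearMap.fst ℝ V (Dual ℝ V)) = Δ := by
  ext X
  refine ⟨?_, fun hX => ?_⟩
  · rintro ⟨w, ⟨hw, -⟩, rfl⟩
    exact hw
  · obtain ⟨ξ, hξ⟩ := LinearMap.exists_extend (ε ⟨X, hX⟩)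
    exact ⟨(X, ξ), ⟨hX, fun Y => LinearMap.congr_fun hξ Y⟩, rfl⟩

theorem LDE_inf_bot_prod_top :
    LDE Δ ε ⊓ (⊥ : Submodule ℝ V).prod ⊤ = (⊥ : Submodule ℝ V).prod Δ.dualAnnihilator := by
  ext ⟨X, ξ⟩
  simp only [Submodule.mem_inf, Submodule.mem_prod, Submodule.mem_bot, Submodule.mem_top,
    and_true, Submodule.mem_dualAnnihilator]
  constructor
  · rintro ⟨⟨hX, hξ⟩, rfl⟩
    refine ⟨rfl, fun Y hY => ?_⟩
    simpa [(Submodule.mk_eq_zero Δ hX).mpr rfl] using hξ ⟨Y, hY⟩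
  · rintro ⟨rfl, hξ⟩
    refine ⟨⟨Δ.zero_mem, fun Y => ?_⟩, rfl⟩
    simpa [(Submodule.mk_eq_zero Δ Δ.zero_mem).mpr rfl] using hξ Y Y.2

theorem finrank_LDE [FiniteDimensional ℝ V] : finrank ℝ (LDE Δ ε) = finrank ℝ V := by
  rw [← (LDE Δ ε).finrank_map_fst_add_finrank_inf_bot_prod_top, map_fst_LDE,
    LDE_inf_bot_prod_top, Submodule.finrank_bot_prod,
    Subspace.finrank_add_finrank_dualAnnihilator_eq]

end LDE

/-- For every subspace `Δ ⊆ V` and alternating bilinear form `ε` on `Δ`, the subspace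
`L(Δ,ε)` is maximal isotropic, with `L(Δ,ε) ∩ ({0} ⊕ V*) = {0} ⊕ Ann(Δ)` and
`π_V(L(Δ,ε)) = Δ`. -/
theorem LDE_maximal_isotropic
    {V : Type*} [AddCommGroup V] [Module ℝ V] [FiniteDimensional ℝ V]
    (Δ : Submodule ℝ V) (ε : Δ →ₗ[ℝ] Δ →ₗ[ℝ] ℝ) (halt : ∀ X : Δ, ε X X = 0) :
    (∀ x ∈ LDE Δ ε, ∀ y ∈ LDE Δ ε, pairB V x y = 0) ∧
    Module.finrank ℝ (LDE Δ ε) = Module.finrank ℝ V ∧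
    LDE Δ ε ⊓ (⊥ : Submodule ℝ V).prod (⊤ : Submodule ℝ (Module.Dual ℝ V))
      = (⊥ : Submodule ℝ V).prod Δ.dualAnnihilator ∧
    Submodule.map (LinearMap.fst ℝ V (Module.Dual ℝ V)) (LDE Δ ε) = Δ :=
  ⟨LDE_isotropic Δ ε halt, finrank_LDE Δ ε, LDE_inf_bot_prod_top Δ ε, map_fst_LDE Δ ε⟩
end

section
/- Every maximal isotropic subspace L ⊆ W is of the form L(Δ,ε): setting Δ = π_V(L), there exists a unique alternating bilinear form ε on Δ such that L = L(Δ,ε). -/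
/-!
An element `(0, ξ)` of an isotropic `L` pairs to `ξ(X)` with every `X + η ∈ L`, so `ξ` vanishes on
`Δ = π_V(L)`. Hence the restriction of `ξ` to `Δ` for `X + ξ ∈ L` depends only on `X`, which defines
`ε` with `L ⊆ L(Δ,ε)`. Since `dim L(Δ,ε) ≤ dim Δ + dim Ann(Δ) = m = dim L`, equality holds.
Isotropy of `X + ξ` with itself gives `ε(X,X) = ξ(X) = 0`, and `ε` is recovered from `L(Δ,ε)`
because every functional on `Δ` extends to `V`.
-/

open Module

open LinearMap

theorem finrank_le_of_fst_mem_of_snd_mem_dualAnnihilator {K V : Type*} [Field K]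
    [AddCommGroup V] [Module K V] [FiniteDimensional K V]
    (L : Submodule K (V × Dual K V)) (Δ : Submodule K V)
    (hfst : ∀ w ∈ L, w.1 ∈ Δ) (hsnd : ∀ w ∈ L, w.1 = 0 → w.2 ∈ Δ.dualAnnihilator) :
    finrank K L ≤ finrank K V := by
  let π := (fst K V (Dual K V)).comp L.subtype
  have hrange : finrank K (range π) ≤ finrank K Δ :=
    Submodule.finrank_mono <| by rintro _ ⟨w, rfl⟩; exact hfst w w.2
  let σ : ker π →ₗ[K] Δ.dualAnnihilator :=
    ((snd K V (Dual K V)).comp (L.subtype.comp (ker π).subtype)).codRestrict _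
      fun w => hsnd _ w.1.2 w.2
  have hσ : Function.Injective σ := fun a b hab =>
    Subtype.ext <| Subtype.ext <| Prod.ext (a.2.trans b.2.symm) (congrArg Subtype.val hab)
  have hker : finrank K (ker π) ≤ finrank K Δ.dualAnnihilator :=
    finrank_le_finrank_of_injective hσ
  have := LinearMap.finrank_range_add_finrank_ker (K := K) (V := L) π
  have := Subspace.finrank_add_finrank_dualAnnihilator_eq Δ
  omega

section LDE

variable {V : Type*} [AddCommGroup V] [Module ℝ V]

theorem finrank_LDE_le [FiniteDimensional ℝ V] (Δ : Submodule ℝ V) (ε : Δ →ₗ[ℝ] Δ →ₗ[ℝ] ℝ) :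
    finrank ℝ (LDE Δ ε) ≤ finrank ℝ V := by
  refine finrank_le_of_fst_mem_of_snd_mem_dualAnnihilator _ Δ (fun w hw => hw.1) ?_
  rintro ⟨X, ξ⟩ ⟨hX, hξ⟩ (rfl : X = 0)
  have h0 : (⟨0, hX⟩ : Δ) = 0 := rfl
  refine (Submodule.mem_dualAnnihilator ξ).2 fun Y hY => ?_
  simpa [h0] using hξ ⟨Y, hY⟩

theorem exists_mk_mem_LDE (Δ : Submodule ℝ V) (ε : Δ →ₗ[ℝ] Δ →ₗ[ℝ] ℝ) (X : Δ) :
    ∃ ξ : Dual ℝ V, ((X : V), ξ) ∈ LDE Δ ε := by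
  obtain ⟨ξ, hξ⟩ := dualMap_surjective_of_injective Δ.injective_subtype (ε X)
  exact ⟨ξ, X.2, fun Y => congrArg (· Y) hξ⟩

theorem LDE_injective (Δ : Submodule ℝ V) : Function.Injective (LDE Δ) := by
  intro ε ε' h
  ext X Y
  obtain ⟨ξ, hX, hξ⟩ := exists_mk_mem_LDE Δ ε X
  have hmem : ((X : V), ξ) ∈ LDE Δ ε' := h ▸ ⟨hX, hξ⟩
  obtain ⟨_, hξ'⟩ := hmem
  exact (hξ Y).symm.trans (hξ' Y)

theorem apply_self_eq_zero_of_isotropic_LDE {Δ : Submodule ℝ V} {ε : Δ →ₗ[ℝ] Δ →ₗ[ℝ] ℝ}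
    (hiso : ∀ x ∈ LDE Δ ε, ∀ y ∈ LDE Δ ε, pairB V x y = 0) (X : Δ) : ε X X = 0 := by
  obtain ⟨ξ, hX, hξ⟩ := exists_mk_mem_LDE Δ ε X
  have h := hiso _ ⟨hX, hξ⟩ _ ⟨hX, hξ⟩
  have : pairB V ((X : V), ξ) ((X : V), ξ) = ξ X := by simp only [pairB, mk₂_apply]; ring
  rw [← hξ X, ← this, h]

theorem snd_mem_dualAnnihilator_of_isotropic {L : Submodule ℝ (V × Dual ℝ V)}
    (hiso : ∀ x ∈ L, ∀ y ∈ L, pairB V x y = 0) {w : V × Dual ℝ V} (hw : w ∈ L)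
    (hw₁ : w.1 = 0) : w.2 ∈ (L.map (fst ℝ V (Dual ℝ V))).dualAnnihilator := by
  refine (Submodule.mem_dualAnnihilator _).2 ?_
  rintro _ ⟨z, hz, rfl⟩
  have h := hiso w hw z hz
  simp only [pairB, mk₂_apply, hw₁, map_zero, add_zero, mul_eq_zero] at h
  simpa using h

theorem exists_le_LDE (L : Submodule ℝ (V × Dual ℝ V))
    (hL : ∀ w ∈ L, w.1 = 0 → w.2 ∈ (L.map (fst ℝ V (Dual ℝ V))).dualAnnihilator) :
    ∃ ε, L ≤ LDE (L.map (fst ℝ V (Dual ℝ V))) ε := by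
  set Δ := L.map (fst ℝ V (Dual ℝ V))
  let p : L →ₗ[ℝ] Δ :=
    ((fst ℝ V (Dual ℝ V)).comp L.subtype).codRestrict Δ fun w => Submodule.mem_map_of_mem w.2
  obtain ⟨s, hs⟩ := p.exists_rightInverse_of_surjective <| range_eq_top.2 <| by
    rintro ⟨_, z, hz, rfl⟩
    exact ⟨⟨z, hz⟩, rfl⟩
  refine ⟨Δ.subtype.dualMap ∘ₗ (snd ℝ V (Dual ℝ V)) ∘ₗ L.subtype ∘ₗ s,
    fun w hw => ⟨Submodule.mem_map_of_mem hw, fun Y => ?_⟩⟩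
  set X : Δ := ⟨w.1, Submodule.mem_map_of_mem hw⟩
  have hsX : ((s X : L) : V × Dual ℝ V).1 = w.1 := congrArg Subtype.val (congr($hs X))
  have h := (Submodule.mem_dualAnnihilator _).1
    (hL _ (L.sub_mem hw (s X).2) (by rw [Prod.fst_sub, hsX, sub_self])) Y Y.2
  simpa [sub_eq_zero] using h

end LDE

/-- Every maximal isotropic subspace `L ⊆ W` is of the form `L(Δ,ε)` for `Δ = π_V(L)` and
a unique alternating bilinear form `ε` on `Δ`. -/
theorem maximal_isotropic_eq_LDE
    {V : Type*} [AddCommGroup V] [Module ℝ V] [FiniteDimensional ℝ V]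
    (L : Submodule ℝ (V × Module.Dual ℝ V))
    (hiso : ∀ x ∈ L, ∀ y ∈ L, pairB V x y = 0)
    (hdim : Module.finrank ℝ L = Module.finrank ℝ V) :
    ∃! ε : (Submodule.map (LinearMap.fst ℝ V (Module.Dual ℝ V)) L) →ₗ[ℝ]
           (Submodule.map (LinearMap.fst ℝ V (Module.Dual ℝ V)) L) →ₗ[ℝ] ℝ,
      (∀ X, ε X X = 0) ∧
      L = LDE (Submodule.map (LinearMap.fst ℝ V (Module.Dual ℝ V)) L) ε := by
  obtain ⟨ε, hle⟩ := exists_le_LDE L fun _ hw => snd_mem_dualAnnihilator_of_isotropic hiso hw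
  have hL : L = LDE _ ε := Submodule.eq_of_le_of_finrank_le hle (hdim ▸ finrank_LDE_le _ ε)
  refine ⟨ε, ⟨apply_self_eq_zero_of_isotropic_LDE (hL ▸ hiso), hL⟩, ?_⟩
  rintro ε' ⟨-, hL'⟩
  exact LDE_injective _ (hL'.symm.trans hL)
end

section
/- Let B be a skew-symmetric bilinear form on V, and let e^B : W → W be the map X+ξ ↦ X + ξ + ι_X B, where ι_X B = B(X,·) ∈ V*. Then e^B is orthogonal for the canonical pairing, and for every subspace Δ ⊆ V and alternating bilinear form ε on Δ, e^B(L(Δ,ε)) = L(Δ, ε + B|_Δ), where B|_Δ is the restriction of B to Δ. In particular, B-transforms preserve the projection to V, and hence the type m − dim π_V(L), of every maximal isotropic L ⊆ W. -/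
open Module

/-- The `B`-field transform `e^B : X+ξ ↦ X + ξ + ι_X B` of `W = V ⊕ V*`. -/
noncomputable def eBtransform {V : Type*} [AddCommGroup V] [Module ℝ V]
    (B : LinearMap.BilinForm ℝ V) :
    (V × Module.Dual ℝ V) →ₗ[ℝ] V × Module.Dual ℝ V where
  toFun w := (w.1, w.2 + B w.1)
  map_add' x y := by
    ext
    · rfl
    · show (x + y).2 _ + B (x + y).1 _ = _
      simp only [Prod.fst_add, Prod.snd_add, map_add, LinearMap.add_apply]
      ring
  map_smul' c x := by
    ext
    · rfl
    · show (c • x).2 _ + B (c • x).1 _ = _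
      simp only [Prod.smul_fst, Prod.smul_snd, map_smul, LinearMap.smul_apply,
        LinearMap.add_apply, smul_eq_mul, RingHom.id_apply]
      ring

section BTransform

variable {V : Type*} [AddCommGroup V] [Module ℝ V]

theorem pairB_apply (x y : V × Dual ℝ V) : pairB V x y = 1 / 2 * (x.2 y.1 + y.2 x.1) := rfl

@[simp]
theorem eBtransform_apply (B : LinearMap.BilinForm ℝ V) (w : V × Dual ℝ V) :
    eBtransform B w = (w.1, w.2 + B w.1) :=
  rfl

theorem fst_comp_eBtransform (B : LinearMap.BilinForm ℝ V) :
    LinearMap.fst ℝ V (Dual ℝ V) ∘ₗ eBtransform B = LinearMap.fst ℝ V (Dual ℝ V) :=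
  rfl

theorem eBtransform_comp_eBtransform_neg (B : LinearMap.BilinForm ℝ V) :
    eBtransform B ∘ₗ eBtransform (-B) = LinearMap.id := by
  ext w <;> simp

theorem pairB_eBtransform {B : LinearMap.BilinForm ℝ V} (hskew : ∀ X Y : V, B X Y = - B Y X)
    (x y : V × Dual ℝ V) : pairB V (eBtransform B x) (eBtransform B y) = pairB V x y := by
  simp only [pairB_apply, eBtransform_apply, LinearMap.add_apply, hskew x.1 y.1]
  ring

theorem map_eBtransform_LDE_le (B : LinearMap.BilinForm ℝ V) (Δ : Submodule ℝ V)
    (ε : Δ →ₗ[ℝ] Δ →ₗ[ℝ] ℝ) :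
    (LDE Δ ε).map (eBtransform B) ≤ LDE Δ (ε + B.restrict Δ) := by
  rintro _ ⟨w, ⟨hw, hε⟩, rfl⟩
  exact ⟨hw, fun Y => by simp [hε Y]⟩

/-- `e^B` has inverse `e^{-B}`, so the reverse inclusion is the forward one for `-B`. -/
theorem map_eBtransform_LDE (B : LinearMap.BilinForm ℝ V) (Δ : Submodule ℝ V)
    (ε : Δ →ₗ[ℝ] Δ →ₗ[ℝ] ℝ) :
    (LDE Δ ε).map (eBtransform B) = LDE Δ (ε + B.restrict Δ) := by
  refine le_antisymm (map_eBtransform_LDE_le B Δ ε) ?_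
  have hinv := map_eBtransform_LDE_le (-B) Δ (ε + B.restrict Δ)
  have hcancel : ε + B.restrict Δ + (-B).restrict Δ = ε := by ext; simp
  rw [hcancel] at hinv
  calc LDE Δ (ε + B.restrict Δ)
      = ((LDE Δ (ε + B.restrict Δ)).map (eBtransform (-B))).map (eBtransform B) := by
        rw [← Submodule.map_comp, eBtransform_comp_eBtransform_neg, Submodule.map_id]
    _ ≤ (LDE Δ ε).map (eBtransform B) := Submodule.map_mono hinv

theorem map_fst_map_eBtransform (B : LinearMap.BilinForm ℝ V)
    (L : Submodule ℝ (V × Dual ℝ V)) :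
    (L.map (eBtransform B)).map (LinearMap.fst ℝ V (Dual ℝ V)) =
      L.map (LinearMap.fst ℝ V (Dual ℝ V)) := by
  rw [← Submodule.map_comp, fst_comp_eBtransform]

end BTransform

theorem eBtransform_properties_general
    {V : Type*} [AddCommGroup V] [Module ℝ V]
    (B : LinearMap.BilinForm ℝ V) (hskew : ∀ X Y : V, B X Y = - B Y X) :
    (∀ x y, pairB V (eBtransform B x) (eBtransform B y) = pairB V x y) ∧
    (∀ (Δ : Submodule ℝ V) (ε : Δ →ₗ[ℝ] Δ →ₗ[ℝ] ℝ),
      Submodule.map (eBtransform B) (LDE Δ ε) = LDE Δ (ε + B.restrict Δ)) ∧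
    (∀ L : Submodule ℝ (V × Module.Dual ℝ V),
      Submodule.map (LinearMap.fst ℝ V (Module.Dual ℝ V)) (Submodule.map (eBtransform B) L)
        = Submodule.map (LinearMap.fst ℝ V (Module.Dual ℝ V)) L) :=
  ⟨pairB_eBtransform hskew, map_eBtransform_LDE B, map_fst_map_eBtransform B⟩

/-- A `B`-field transform is orthogonal, sends `L(Δ,ε)` to `L(Δ, ε + B|_Δ)`, and preserves
the projection to `V` (hence the type) of every subspace of `W`. -/
theorem eBtransform_properties
    {V : Type*} [AddCommGroup V] [Module ℝ V] [FiniteDimensional ℝ V]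
    (B : LinearMap.BilinForm ℝ V) (hskew : ∀ X Y : V, B X Y = - B Y X) :
    (∀ x y, pairB V (eBtransform B x) (eBtransform B y) = pairB V x y) ∧
    (∀ (Δ : Submodule ℝ V) (ε : Δ →ₗ[ℝ] Δ →ₗ[ℝ] ℝ),
      Submodule.map (eBtransform B) (LDE Δ ε) = LDE Δ (ε + B.restrict Δ)) ∧
    (∀ L : Submodule ℝ (V × Module.Dual ℝ V),
      Submodule.map (LinearMap.fst ℝ V (Module.Dual ℝ V)) (Submodule.map (eBtransform B) L)
        = Submodule.map (LinearMap.fst ℝ V (Module.Dual ℝ V)) L) :=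
  eBtransform_properties_general B hskew
end

section
/- Let β : V* → V be a linear map that is skew in the sense that ξ(β(η)) = −η(β(ξ)) for all ξ, η ∈ V* (a bivector), and let e^β : W → W be the map X+ξ ↦ X + β(ξ) + ξ. Then e^β is orthogonal for the canonical pairing; for every maximal isotropic L ⊆ W, the image e^β(L) is maximal isotropic, e^β(L) ∩ (V ⊕ {0}) = L ∩ (V ⊕ {0}), and dim π_V(e^β(L)) ≡ dim π_V(L) (mod 2), i.e. a β-transform changes the type of a maximal isotropic by an even number. -/
/-!
Since `e^β` only adds `β ξ` to the `V`-component, the skew-symmetry of `β` makes it an isometry of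
the pairing, so it maps maximal isotropics to maximal isotropics, fixes `V ⊕ 0` pointwise and does
not change `π_{V*}(L)`. The parity statement then follows from the fact that for every maximal
isotropic `L`, `dim π_V(L) + dim π_{V*}(L) ≡ dim V (mod 2)`: isotropy makes
`(X + ξ, Y + η) ↦ ξ(Y)` a skew form on `L`, whose kernel has dimension
`dim (L ∩ V*) + dim (L ∩ V)` (the upper bound uses `dim L = dim V`), and a skew form has even rank.
-/

open Module

/-- The `β`-field transform `e^β : X+ξ ↦ X + β(ξ) + ξ` of `W = V ⊕ V*` determined by a
bivector `β : V* → V`. -/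
noncomputable def betaTransform {V : Type*} [AddCommGroup V] [Module ℝ V]
    (β : Module.Dual ℝ V →ₗ[ℝ] V) :
    (V × Module.Dual ℝ V) →ₗ[ℝ] V × Module.Dual ℝ V where
  toFun w := (w.1 + β w.2, w.2)
  map_add' x y := by
    ext
    · show (x + y).1 + β (x + y).2 = _
      simp only [Prod.fst_add, Prod.snd_add, map_add]
      abel
    · rfl
  map_smul' c x := by
    ext
    · show (c • x).1 + β (c • x).2 = _
      simp only [Prod.smul_fst, Prod.smul_snd, map_smul, smul_add, RingHom.id_apply]
    · rfl

open LinearMap Matrix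

namespace LinearMap.BilinForm

variable {K U : Type*} [Field K] [NeZero (2 : K)] [AddCommGroup U] [Module K U]
  [FiniteDimensional K U] {B : LinearMap.BilinForm K U}

theorem even_finrank_of_nondegenerate_of_skew (hB : ∀ u v, B u v = -B v u)
    (hnd : B.Nondegenerate) : Even (finrank K U) := by
  by_contra hodd
  rw [Nat.not_even_iff_odd] at hodd
  let b := finBasis K U
  set M := toMatrix b B
  have hMT : Mᵀ = -M := by
    ext i j
    simp [M, toMatrix_apply, hB (b j)]
  have hdet : M.det = -M.det := by
    simpa [hMT, Matrix.det_neg, hodd.neg_one_pow] using (Matrix.det_transpose M).symm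
  refine (nondegenerate_iff_det_ne_zero b).mp hnd ?_
  have htwo : (2 : K) * M.det = 0 := by linear_combination hdet
  exact (mul_eq_zero.mp htwo).resolve_left two_ne_zero

theorem even_finrank_range_of_skew (hB : ∀ u v, B u v = -B v u) :
    Even (finrank K (range B)) := by
  obtain ⟨U', hU'⟩ := (ker B).exists_isCompl
  have hrefl : B.IsRefl := fun x y h => by rw [hB, h, neg_zero]
  have hdisj : Disjoint U' (U'.orthogonalBilin B) := by
    refine Submodule.disjoint_def.mpr fun x hxU' hx => ?_
    refine Submodule.disjoint_def.mp hU'.disjoint x ?_ hxU'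
    have hU'le : U' ≤ ker (B x) := fun y hy => by
      rw [mem_ker, hB, hx y hy, neg_zero]
    have hkerle : ker B ≤ ker (B x) := fun y hy => by
      simp [hB x y, mem_ker.mp hy]
    rw [mem_ker, ← ker_eq_top, eq_top_iff, ← hU'.sup_eq_top]
    exact sup_le hkerle hU'le
  have heven := even_finrank_of_nondegenerate_of_skew (B := B.domRestrict₁₂ U' U')
    (fun u v => hB u v) (LinearMap.nondegenerate_restrict_of_disjoint_orthogonal hrefl hdisj)
  have h1 := Submodule.finrank_add_eq_of_isCompl hU'
  have h2 := finrank_range_add_finrank_ker B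
  rwa [show finrank K (range B) = finrank K U' by omega]

end LinearMap.BilinForm

theorem Submodule.finrank_comap_le {K M N : Type*} [Field K] [AddCommGroup M] [Module K M]
    [AddCommGroup N] [Module K N] [FiniteDimensional K M] [FiniteDimensional K N]
    (g : M →ₗ[K] N) (S : Submodule K N) :
    finrank K (S.comap g) ≤ finrank K S + finrank K (ker g) := by
  have hrange : finrank K (range (g.domRestrict (S.comap g))) ≤ finrank K S := by
    rw [range_domRestrict]
    exact Submodule.finrank_mono (Submodule.map_comap_le g S)
  have hker : finrank K (ker (g.domRestrict (S.comap g))) = finrank K (ker g) := by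
    rw [ker_domRestrict]
    exact (Submodule.comapSubtypeEquivOfLe (ker_le_comap g)).finrank_eq
  have := finrank_range_add_finrank_ker (g.domRestrict (S.comap g))
  omega

section Lagrangian

variable {K V : Type*} [Field K] [AddCommGroup V] [Module K V]

def Submodule.evalForm (L : Submodule K (V × Dual K V)) : LinearMap.BilinForm K L :=
  ((LinearMap.fst K V (Dual K V)).comp L.subtype).dualMap.comp
    ((LinearMap.snd K V (Dual K V)).comp L.subtype)

theorem Submodule.evalForm_apply (L : Submodule K (V × Dual K V)) (u v : L) :
    L.evalForm u v = (u : V × Dual K V).2 (v : V × Dual K V).1 :=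
  rfl

variable {L : Submodule K (V × Dual K V)}

theorem Submodule.evalForm_skew (hL : ∀ x ∈ L, ∀ y ∈ L, x.2 y.1 + y.2 x.1 = 0) (u v : L) :
    L.evalForm u v = -L.evalForm v u := by
  rw [evalForm_apply, evalForm_apply, eq_neg_iff_add_eq_zero]
  exact hL u u.2 v v.2

theorem Submodule.finrank_ker_evalForm [FiniteDimensional K V]
    (hL : ∀ x ∈ L, ∀ y ∈ L, x.2 y.1 + y.2 x.1 = 0) (hdim : finrank K L = finrank K V) :
    finrank K (ker L.evalForm) = finrank K (ker ((LinearMap.fst K V (Dual K V)).comp L.subtype)) +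
      finrank K (ker ((LinearMap.snd K V (Dual K V)).comp L.subtype)) := by
  set f : L →ₗ[K] V := (LinearMap.fst K V (Dual K V)).comp L.subtype
  set g : L →ₗ[K] Dual K V := (LinearMap.snd K V (Dual K V)).comp L.subtype
  apply le_antisymm
  · have hker : ker L.evalForm = (range f).dualAnnihilator.comap g := by
      rw [evalForm, ker_comp, ker_dualMap_eq_dualAnnihilator_range]
    have hann := Subspace.finrank_add_finrank_dualAnnihilator_eq (range f)
    have hf := finrank_range_add_finrank_ker (V := L) f
    have := Submodule.finrank_comap_le (M := L) g (range f).dualAnnihilator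
    rw [hker]
    omega
  · have hle : ker f ⊔ ker g ≤ ker L.evalForm := by
      refine sup_le (fun u hu => ?_) (fun u hu => ?_) <;> ext v
      · rw [evalForm_skew hL, evalForm_apply, show (u : V × Dual K V).1 = 0 from hu]
        simp
      · rw [evalForm_apply, show (u : V × Dual K V).2 = 0 from hu]
        simp
    have hdisj : ker f ⊓ ker g = ⊥ := by
      rw [eq_bot_iff]
      rintro u ⟨hf, hg⟩
      exact Subtype.ext (Prod.ext hf hg)
    have := Submodule.finrank_sup_add_finrank_inf_eq (V := L) (ker f) (ker g)
    rw [hdisj, finrank_bot] at this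
    have := Submodule.finrank_mono hle
    omega

theorem Submodule.finrank_map_fst_add_finrank_map_snd_mod_two [NeZero (2 : K)]
    [FiniteDimensional K V] (hL : ∀ x ∈ L, ∀ y ∈ L, x.2 y.1 + y.2 x.1 = 0)
    (hdim : finrank K L = finrank K V) :
    (finrank K (L.map (LinearMap.fst K V (Dual K V))) +
        finrank K (L.map (LinearMap.snd K V (Dual K V)))) % 2 = finrank K V % 2 := by
  obtain ⟨t, ht⟩ := LinearMap.BilinForm.even_finrank_range_of_skew
    (U := L) (evalForm_skew hL)
  have hker := finrank_ker_evalForm hL hdim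
  have hC := finrank_range_add_finrank_ker (V := L) L.evalForm
  have hf := finrank_range_add_finrank_ker (V := L) ((LinearMap.fst K V (Dual K V)).comp L.subtype)
  have hg := finrank_range_add_finrank_ker (V := L) ((LinearMap.snd K V (Dual K V)).comp L.subtype)
  rw [range_comp, range_subtype] at hf hg
  omega

end Lagrangian

section BetaTransform

variable {V : Type*} [AddCommGroup V] [Module ℝ V]

theorem pairB_eq_zero_iff (x y : V × Dual ℝ V) : pairB V x y = 0 ↔ x.2 y.1 + y.2 x.1 = 0 := by
  simp [pairB]

theorem betaTransform_apply (β : Dual ℝ V →ₗ[ℝ] V) (w : V × Dual ℝ V) :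
    betaTransform β w = (w.1 + β w.2, w.2) :=
  rfl

theorem betaTransform_injective (β : Dual ℝ V →ₗ[ℝ] V) : Function.Injective (betaTransform β) := by
  intro x y h
  simp only [betaTransform_apply, Prod.mk.injEq] at h
  obtain ⟨h1, h2⟩ := h
  rw [h2, add_left_inj] at h1
  exact Prod.ext h1 h2

theorem pairB_betaTransform {β : Dual ℝ V →ₗ[ℝ] V} (hβ : ∀ ξ η : Dual ℝ V, ξ (β η) = -η (β ξ))
    (x y : V × Dual ℝ V) : pairB V (betaTransform β x) (betaTransform β y) = pairB V x y := by
  simp only [pairB, betaTransform_apply, mk₂_apply, map_add, hβ x.2 y.2]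
  ring

theorem map_snd_map_betaTransform (β : Dual ℝ V →ₗ[ℝ] V) (L : Submodule ℝ (V × Dual ℝ V)) :
    (L.map (betaTransform β)).map (LinearMap.snd ℝ V (Dual ℝ V)) =
      L.map (LinearMap.snd ℝ V (Dual ℝ V)) := by
  rw [← Submodule.map_comp]
  rfl

theorem map_betaTransform_inf_prod_bot (β : Dual ℝ V →ₗ[ℝ] V) (L : Submodule ℝ (V × Dual ℝ V)) :
    L.map (betaTransform β) ⊓ (⊤ : Submodule ℝ V).prod ⊥ = L ⊓ (⊤ : Submodule ℝ V).prod ⊥ := by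
  have hfix : ∀ w : V × Dual ℝ V, w.2 = 0 → betaTransform β w = w := fun w hw => by
    rw [betaTransform_apply, hw, map_zero, add_zero]
    exact Prod.ext rfl hw.symm
  ext w
  simp only [Submodule.mem_inf, Submodule.mem_prod, Submodule.mem_top, true_and,
    Submodule.mem_bot, Submodule.mem_map]
  constructor
  · rintro ⟨⟨u, hu, rfl⟩, hw⟩
    rw [hfix u hw]
    exact ⟨hu, hw⟩
  · rintro ⟨hw, hw2⟩
    exact ⟨⟨w, hw, hfix w hw2⟩, hw2⟩

end BetaTransform

/-- A `β`-transform is orthogonal, maps maximal isotropics to maximal isotropics,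
preserves `L ∩ (V ⊕ {0})`, and changes the type of a maximal isotropic by an even
number: `dim π_V(e^β L) ≡ dim π_V(L) (mod 2)`. -/
theorem betaTransform_properties
    {V : Type*} [AddCommGroup V] [Module ℝ V] [FiniteDimensional ℝ V]
    (β : Module.Dual ℝ V →ₗ[ℝ] V)
    (hskew : ∀ ξ η : Module.Dual ℝ V, ξ (β η) = - η (β ξ)) :
    (∀ x y, pairB V (betaTransform β x) (betaTransform β y) = pairB V x y) ∧
    ∀ L : Submodule ℝ (V × Module.Dual ℝ V),
      (∀ x ∈ L, ∀ y ∈ L, pairB V x y = 0) →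
      Module.finrank ℝ L = Module.finrank ℝ V →
      ((∀ x ∈ Submodule.map (betaTransform β) L, ∀ y ∈ Submodule.map (betaTransform β) L,
          pairB V x y = 0) ∧
       Module.finrank ℝ (Submodule.map (betaTransform β) L) = Module.finrank ℝ V ∧
       Submodule.map (betaTransform β) L
           ⊓ (⊤ : Submodule ℝ V).prod (⊥ : Submodule ℝ (Module.Dual ℝ V))
         = L ⊓ (⊤ : Submodule ℝ V).prod (⊥ : Submodule ℝ (Module.Dual ℝ V)) ∧
       Module.finrank ℝ (Submodule.map (LinearMap.fst ℝ V (Module.Dual ℝ V))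
           (Submodule.map (betaTransform β) L)) % 2
         = Module.finrank ℝ (Submodule.map (LinearMap.fst ℝ V (Module.Dual ℝ V)) L) % 2) := by
  refine ⟨pairB_betaTransform hskew, fun L hL hdim => ?_⟩
  have hL' : ∀ x ∈ L.map (betaTransform β), ∀ y ∈ L.map (betaTransform β), pairB V x y = 0 := by
    rintro _ ⟨x, hx, rfl⟩ _ ⟨y, hy, rfl⟩
    rw [pairB_betaTransform hskew]
    exact hL x hx y hy
  have hdim' : finrank ℝ (L.map (betaTransform β)) = finrank ℝ V :=
    hdim ▸ (Submodule.equivMapOfInjective _ (betaTransform_injective β) L).finrank_eq.symm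
  refine ⟨hL', hdim', map_betaTransform_inf_prod_bot β L, ?_⟩
  have hpar := L.finrank_map_fst_add_finrank_map_snd_mod_two
    (fun x hx y hy => (pairB_eq_zero_iff x y).mp (hL x hx y hy)) hdim
  have hpar' := (L.map (betaTransform β)).finrank_map_fst_add_finrank_map_snd_mod_two
    (fun x hx y hy => (pairB_eq_zero_iff x y).mp (hL' x hx y hy)) hdim'
  rw [map_snd_map_betaTransform] at hpar'
  omega
end

section
/- The Mukai pairing is symmetric or skew-symmetric according to the dimension: for all s, t ∈ ∧•V*, (s,t) = (−1)^{m(m−1)/2} (t,s). -/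
open Module

set_option synthInstance.maxHeartbeats 1000000
set_option maxHeartbeats 1000000

/-- The spin representation of `W = V ⊕ V*` on the forms `∧•V*`:
`(X+ξ)·φ = ι_X φ + ξ ∧ φ`. -/
noncomputable def spinAction {V : Type*} [AddCommGroup V] [Module ℝ V]
    (v : V × Module.Dual ℝ V) :
    ExteriorAlgebra ℝ (Module.Dual ℝ V) →ₗ[ℝ] ExteriorAlgebra ℝ (Module.Dual ℝ V) :=
  CliffordAlgebra.contractLeft (Module.Dual.eval ℝ V v.1)
    + LinearMap.mulLeft ℝ (ExteriorAlgebra.ι ℝ v.2)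

/-- The Mukai pairing `(s,t) = [s^⊤ ∧ t]_m`, valued in the degree-`m` component of the
exterior algebra of `V*`. -/
noncomputable def mukai {V : Type*} [AddCommGroup V] [Module ℝ V] [FiniteDimensional ℝ V]
    (s t : ExteriorAlgebra ℝ (Module.Dual ℝ V)) :
    ExteriorAlgebra ℝ (Module.Dual ℝ V) :=
  GradedAlgebra.proj (fun i : ℕ => ⋀[ℝ]^i (Module.Dual ℝ V)) (Module.finrank ℝ V)
    (CliffordAlgebra.reverse (Q := (0 : QuadraticForm ℝ (Module.Dual ℝ V))) s * t)

/-!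
Reversal acts on `⋀ⁿ V*` as the sign `(-1)^(n choose 2)`: a vector anticommutes with each
factor of a form, so `(w ∧ x)^⊤ = x^⊤ ∧ w = (-1)^(k + k choose 2) w ∧ x` for `x` of degree `k`. Since `(s^⊤ ∧ t)^⊤ = t^⊤ ∧ s`,
taking degree-`m` components gives `(t,s) = (-1)^(m choose 2) (s,t)`.
-/

namespace ExteriorAlgebra

variable {R M : Type*} [CommRing R] [AddCommGroup M] [Module R M]

theorem ι_mul_ι_eq_neg (v w : M) : ι R v * ι R w = -(ι R w * ι R v) :=
  eq_neg_of_add_eq_zero_left (ι_add_mul_swap v w)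

theorem ι_mul_eq_neg_one_pow_smul_mul_ι {n : ℕ} {x : ExteriorAlgebra R M} (hx : x ∈ ⋀[R]^n M)
    (v : M) : ι R v * x = (-1 : R) ^ n • (x * ι R v) := by
  induction hx using Submodule.pow_induction_on_left' with
  | algebraMap r => rw [pow_zero, one_smul, Algebra.commutes]
  | add x y i _ _ ihx ihy => rw [mul_add, add_mul, smul_add, ihx, ihy]
  | mem_mul _ hm i x _ ih =>
    obtain ⟨w, rfl⟩ := hm
    rw [← mul_assoc, ι_mul_ι_eq_neg, neg_mul, mul_assoc, ih, mul_smul_comm, ← mul_assoc,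
      pow_succ, mul_neg_one, neg_smul]

theorem reverse_eq_neg_one_pow_choose_smul {n : ℕ} {x : ExteriorAlgebra R M}
    (hx : x ∈ ⋀[R]^n M) :
    CliffordAlgebra.reverse (Q := (0 : QuadraticForm R M)) x = (-1 : R) ^ n.choose 2 • x := by
  induction hx using Submodule.pow_induction_on_left' with
  | algebraMap r => simp [CliffordAlgebra.reverse.commutes]
  | add x y i _ _ ihx ihy => rw [map_add, ihx, ihy, smul_add]
  | mem_mul _ hm i x hx ih =>
    obtain ⟨w, rfl⟩ := hm
    have hswap : x * ι R w = (-1 : R) ^ i • (ι R w * x) := by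
      rw [ι_mul_eq_neg_one_pow_smul_mul_ι hx w, smul_smul, ← mul_pow, neg_mul_neg, one_mul,
        one_pow, one_smul]
    rw [CliffordAlgebra.reverse.map_mul, CliffordAlgebra.reverse_ι, ih, smul_mul_assoc, hswap,
      smul_smul, ← pow_add, Nat.choose_succ_succ', Nat.choose_one_right, add_comm]

theorem proj_reverse (m : ℕ) (u : ExteriorAlgebra R M) :
    GradedAlgebra.proj (fun i : ℕ => ⋀[R]^i M) m
        (CliffordAlgebra.reverse (Q := (0 : QuadraticForm R M)) u)
      = (-1 : R) ^ m.choose 2 • GradedAlgebra.proj (fun i : ℕ => ⋀[R]^i M) m u := by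
  induction u using DirectSum.Decomposition.inductionOn (fun i : ℕ => ⋀[R]^i M) with
  | zero => simp
  | add x y hx hy => rw [map_add, map_add, map_add, hx, hy, smul_add]
  | @homogeneous i x =>
    obtain ⟨x, hx⟩ := x
    rw [reverse_eq_neg_one_pow_choose_smul hx, map_smul]
    rcases eq_or_ne i m with rfl | hne
    · rfl
    · rw [GradedAlgebra.proj_apply,
        DirectSum.decompose_of_mem_ne (fun i : ℕ => ⋀[R]^i M) hx hne, smul_zero, smul_zero]

end ExteriorAlgebra

/-- The Mukai pairing is symmetric or skew-symmetric according to the dimension: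
`(s,t) = (−1)^{m(m−1)/2} (t,s)`. -/
theorem mukai_symmetry
    {V : Type*} [AddCommGroup V] [Module ℝ V] [FiniteDimensional ℝ V]
    (s t : ExteriorAlgebra ℝ (Module.Dual ℝ V)) :
    mukai s t
      = ((-1 : ℝ) ^ (Module.finrank ℝ V * (Module.finrank ℝ V - 1) / 2)) • mukai t s := by
  have h := ExteriorAlgebra.proj_reverse (Module.finrank ℝ V)
    (CliffordAlgebra.reverse (Q := (0 : QuadraticForm ℝ (Module.Dual ℝ V))) t * s)
  rw [CliffordAlgebra.reverse.map_mul, CliffordAlgebra.reverse_reverse,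
    Nat.choose_two_right] at h
  exact h
end

section
/- Let J : W → W be an ℝ-linear map with J∘J = −id_W, and suppose that the +i-eigenspace L of the complexified map J_ℂ on W ⊗ ℂ is isotropic for the ℂ-bilinear extension of the canonical pairing. Then J is orthogonal, i.e. ⟨Jx, Jy⟩ = ⟨x, y⟩ for all x, y ∈ W; consequently the bilinear form (x,y) ↦ ⟨Jx, y⟩ is alternating and nondegenerate (a symplectic form) on W. -/
/-!
For real `x`, the vector `1 ⊗ x - i ⊗ Jx` lies in the `+i`-eigenspace of `J_ℂ`. The ℂ-bilinear
pairing of two of them has real part `⟨x, y⟩ - ⟨Jx, Jy⟩` and imaginary part `-(⟨x, Jy⟩ + ⟨Jx, y⟩)`,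
so isotropy makes `J` orthogonal and skew-adjoint. Skew-adjointness for a symmetric form forces
`⟨Jx, x⟩ = 0`, and since `J` is invertible and the canonical pairing is nondegenerate, so is
`(x, y) ↦ ⟨Jx, y⟩`.
-/

open Module

open TensorProduct

theorem one_tmul_sub_tmul_mem_eigenspace_baseChange {R A M : Type*} [CommRing R] [CommRing A]
    [Algebra R A] [AddCommGroup M] [Module R M] {J : End R M} (hJ : J ∘ₗ J = -LinearMap.id)
    {i : A} (hi : i * i = -1) (x : M) :
    (1 : A) ⊗ₜ[R] x - i ⊗ₜ[R] J x ∈ End.eigenspace (J.baseChange A) i := by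
  have hJJ : J (J x) = -x := by simpa using LinearMap.congr_fun hJ x
  rw [End.mem_eigenspace_iff, map_sub, LinearMap.baseChange_tmul, LinearMap.baseChange_tmul,
    hJJ, smul_sub, smul_tmul', smul_tmul', smul_eq_mul, smul_eq_mul, mul_one, hi, tmul_neg,
    neg_tmul]
  abel

theorem LinearMap.BilinForm.baseChange_complex_one_tmul_sub_I_tmul {M : Type*} [AddCommGroup M]
    [Module ℝ M] (B : LinearMap.BilinForm ℝ M) (x x' y y' : M) :
    B.baseChange ℂ (1 ⊗ₜ x - Complex.I ⊗ₜ x') (1 ⊗ₜ y - Complex.I ⊗ₜ y') =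
      ⟨B x y - B x' y', -(B x y' + B x' y)⟩ :=
  Complex.ext (by simp) (by simp [sub_eq_add_neg, add_comm])

theorem LinearMap.BilinForm.apply_map_map_eq_and_skew_of_isotropic_eigenspace_I {M : Type*}
    [AddCommGroup M] [Module ℝ M] (B : LinearMap.BilinForm ℝ M) {J : End ℝ M}
    (hJ : J ∘ₗ J = -LinearMap.id)
    (hiso : ∀ x ∈ End.eigenspace (J.baseChange ℂ) Complex.I,
      ∀ y ∈ End.eigenspace (J.baseChange ℂ) Complex.I, B.baseChange ℂ x y = 0)
    (x y : M) :
    B (J x) (J y) = B x y ∧ B x (J y) + B (J x) y = 0 := by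
  have h := hiso _ (one_tmul_sub_tmul_mem_eigenspace_baseChange hJ Complex.I_mul_I x)
    _ (one_tmul_sub_tmul_mem_eigenspace_baseChange hJ Complex.I_mul_I y)
  rw [baseChange_complex_one_tmul_sub_I_tmul, Complex.ext_iff] at h
  simp only [Complex.zero_re, Complex.zero_im, neg_eq_zero] at h
  exact ⟨(sub_eq_zero.1 h.1).symm, h.2⟩

theorem pairB_isSymm (V : Type*) [AddCommGroup V] [Module ℝ V] : (pairB V).IsSymm :=
  ⟨fun x y => by simp only [pairB, LinearMap.mk₂_apply]; ring⟩

theorem pairB_separatingLeft (V : Type*) [AddCommGroup V] [Module ℝ V] :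
    (pairB V).SeparatingLeft := by
  intro z hz
  have hz₁ : z.1 = 0 := (forall_dual_apply_eq_zero_iff ℝ z.1).1 fun φ => by
    simpa [pairB] using hz (0, φ)
  have hz₂ : z.2 = 0 := LinearMap.ext fun v => by
    simpa [pairB, hz₁] using hz (v, 0)
  exact Prod.ext hz₁ hz₂

theorem isotropic_eigenspace_implies_orthogonal_general
    {V : Type*} [AddCommGroup V] [Module ℝ V]
    (J : (V × Module.Dual ℝ V) →ₗ[ℝ] V × Module.Dual ℝ V)
    (hJ2 : J ∘ₗ J = -LinearMap.id)
    (hiso : ∀ x ∈ Module.End.eigenspace (LinearMap.baseChange ℂ J) Complex.I,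
            ∀ y ∈ Module.End.eigenspace (LinearMap.baseChange ℂ J) Complex.I,
              LinearMap.BilinForm.baseChange ℂ (pairB V) x y = 0) :
    (∀ x y, pairB V (J x) (J y) = pairB V x y) ∧
    (∀ x, pairB V (J x) x = 0) ∧
    (∀ x, (∀ y, pairB V (J x) y = 0) → x = 0) := by
  have key := (pairB V).apply_map_map_eq_and_skew_of_isotropic_eigenspace_I hJ2 hiso
  refine ⟨fun x y => (key x y).1, fun x => ?_, fun x hx => ?_⟩
  · have hskew := (key x x).2
    rw [(pairB_isSymm V).eq x (J x)] at hskew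
    linarith
  · have hJx : J x = 0 := pairB_separatingLeft V _ hx
    simpa [hJx] using (LinearMap.congr_fun hJ2 x).symm

/-- If `J : W → W` squares to `−1` and the `+i`-eigenspace of its complexification is
isotropic for the ℂ-bilinear extension of the canonical pairing, then `J` is orthogonal,
and `(x,y) ↦ ⟨Jx, y⟩` is a symplectic (alternating nondegenerate) form on `W`. -/
theorem isotropic_eigenspace_implies_orthogonal
    {V : Type*} [AddCommGroup V] [Module ℝ V] [FiniteDimensional ℝ V]
    (J : (V × Module.Dual ℝ V) →ₗ[ℝ] V × Module.Dual ℝ V)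
    (hJ2 : J ∘ₗ J = -LinearMap.id)
    (hiso : ∀ x ∈ Module.End.eigenspace (LinearMap.baseChange ℂ J) Complex.I,
            ∀ y ∈ Module.End.eigenspace (LinearMap.baseChange ℂ J) Complex.I,
              LinearMap.BilinForm.baseChange ℂ (pairB V) x y = 0) :
    (∀ x y, pairB V (J x) (J y) = pairB V x y) ∧
    (∀ x, pairB V (J x) x = 0) ∧
    (∀ x, (∀ y, pairB V (J x) y = 0) → x = 0) :=
  isotropic_eigenspace_implies_orthogonal_general J hJ2 hiso
end
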